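/- In R(3,3), for any two distinct black vertices s and t, the longest path from s to t has exactly 7 vertices. -/

import Mathlib

/-- The infinite two-dimensional integer grid graph: vertices are points of `ℤ × ℤ`,
with an edge between two points at distance 1. -/
def GInf : SimpleGraph (ℤ × ℤ) where
  Adj u v := (u.1 - v.1).natAbs + (u.2 - v.2).natAbs = 1
  symm := by constructor; intro u v h; omega
  loopless := by constructor; intro v h; omega

/-- A vertex is white if the sum of its coordinates is even (otherwise it is black). -/
def White (v : ℤ × ℤ) : Prop := Even (v.1 + v.2)

/-- The vertex set of the rectangular grid graph `R(m,n)`. -/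
def RectV (m n : ℕ) : Set (ℤ × ℤ) :=
  {v | 1 ≤ v.1 ∧ v.1 ≤ (m : ℤ) ∧ 1 ≤ v.2 ∧ v.2 ≤ (n : ℤ)}

/-- The rectangular grid graph `R(m,n)`. -/
def R (m n : ℕ) : SimpleGraph (RectV m n) := GInf.induce (RectV m n)

/-!
Colours alternate along a path of the bipartite grid, so a path between two black vertices
contains one more black vertex than white ones. As `R(3,3)` has only four black vertices, such a
path has at most `4 + 3 = 7` vertices; paths with exactly 7 vertices are listed explicitly.
-/

open Finset

theorem List.Nodup.countP_le_card_filter {α : Type*} [Fintype α] [DecidableEq α]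
    {P : α → Prop} [DecidablePred P] {l : List α} (hl : l.Nodup) :
    l.countP (P ·) ≤ (univ.filter P).card := by
  rw [List.countP_eq_length_filter, ← List.toFinset_card_of_nodup (hl.filter _)]
  exact card_le_card fun x hx => by simp_all

namespace SimpleGraph

variable {V : Type*} {G : SimpleGraph V}

theorem exists_isPath_support_eq {u v : V} {l : List V} (hu : l.head? = some u)
    (hv : l.getLast? = some v) (hchain : l.IsChain G.Adj) (hnodup : l.Nodup) :
    ∃ p : G.Walk u v, p.IsPath ∧ p.support = l := by
  have hne : l ≠ [] := by rintro rfl; simp at hu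
  let p := (Walk.ofSupport l hne hchain).copy ((List.head_eq_iff_head?_eq_some hne).2 hu)
    ((List.getLast_eq_iff_getLast?_eq_some hne).2 hv)
  have hsupp : p.support = l := by simp [p]
  exact ⟨p, Walk.isPath_def _ |>.2 (hsupp ▸ hnodup), hsupp⟩

section Alternating

variable {P : V → Prop} [DecidablePred P]

theorem Walk.two_mul_countP_support (hP : ∀ ⦃x y⦄, G.Adj x y → (P x ↔ ¬ P y)) :
    ∀ {u v : V} (p : G.Walk u v),
      2 * p.support.countP (P ·) = p.length + (if P u then 1 else 0) + (if P v then 1 else 0)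
  | u, _, .nil => by by_cases h : P u <;> simp [h]
  | u, _, .cons (v := w) h q => by
    have ih := two_mul_countP_support hP q
    have hflip := hP h
    simp only [Walk.support_cons, List.countP_cons, Walk.length_cons]
    grind

theorem Walk.IsPath.length_support_add_one_le [Fintype V] [DecidableEq V] {u v : V}
    {p : G.Walk u v} (hp : p.IsPath) (hP : ∀ ⦃x y⦄, G.Adj x y → (P x ↔ ¬ P y))
    (hu : P u) (hv : P v) : p.support.length + 1 ≤ 2 * (univ.filter P).card := by
  have hcount := p.two_mul_countP_support hP
  have hle := hp.support_nodup.countP_le_card_filter (P := P)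
  rw [if_pos hu, if_pos hv] at hcount
  rw [Walk.length_support]
  omega

end Alternating

end SimpleGraph

instance : DecidableRel GInf.Adj :=
  fun u v => inferInstanceAs (Decidable ((u.1 - v.1).natAbs + (u.2 - v.2).natAbs = 1))

instance (m n : ℕ) : DecidableRel (R m n).Adj :=
  fun u v => inferInstanceAs (Decidable (GInf.Adj u.val v.val))

instance : DecidablePred White :=
  fun v => inferInstanceAs (Decidable (Even (v.1 + v.2)))

instance (v : ℤ × ℤ) (m n : ℕ) : Decidable (v ∈ RectV m n) :=
  inferInstanceAs (Decidable (1 ≤ v.1 ∧ v.1 ≤ (m : ℤ) ∧ 1 ≤ v.2 ∧ v.2 ≤ (n : ℤ)))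

-- `Finset.Icc` on `ℤ` would go through a noncomputable order instance and block `decide`.
instance (m n : ℕ) : Fintype (RectV m n) :=
  Fintype.ofFinset ((range m ×ˢ range n).image fun ij => ((ij.1 : ℤ) + 1, (ij.2 : ℤ) + 1))
    fun v => by
      simp only [mem_image, mem_product, mem_range, RectV, Set.mem_ofPred_eq]
      constructor
      · rintro ⟨⟨i, j⟩, ⟨hi, hj⟩, rfl⟩
        omega
      · rintro ⟨h1, h2, h3, h4⟩
        exact ⟨((v.1 - 1).toNat, (v.2 - 1).toNat), by omega, by ext <;> simp <;> omega⟩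

theorem white_iff_not_white_of_adj {m n : ℕ} {u v : RectV m n} (h : (R m n).Adj u v) :
    White u.val ↔ ¬ White v.val := by
  have h' : (u.val.1 - v.val.1).natAbs + (u.val.2 - v.val.2).natAbs = 1 := h
  rw [White, White, Int.even_iff, Int.even_iff]
  omega

theorem card_black_R33 : (univ.filter fun v : RectV 3 3 => ¬ White v.val).card = 4 := by
  decide

def cell (x y : ℤ) (h : (x, y) ∈ RectV 3 3 := by decide) : RectV 3 3 := ⟨(x, y), h⟩

def longPathsR33 : List (List (RectV 3 3)) :=
  let paths := [
    [cell 1 2, cell 1 3, cell 2 3, cell 3 3, cell 3 2, cell 2 2, cell 2 1],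
    [cell 1 2, cell 1 1, cell 2 1, cell 3 1, cell 3 2, cell 3 3, cell 2 3],
    [cell 1 2, cell 1 1, cell 2 1, cell 2 2, cell 2 3, cell 3 3, cell 3 2],
    [cell 2 1, cell 1 1, cell 1 2, cell 2 2, cell 3 2, cell 3 3, cell 2 3],
    [cell 2 1, cell 1 1, cell 1 2, cell 1 3, cell 2 3, cell 3 3, cell 3 2],
    [cell 2 3, cell 1 3, cell 1 2, cell 1 1, cell 2 1, cell 3 1, cell 3 2]]
  paths ++ paths.map List.reverse

theorem isChain_nodup_length_of_mem_longPathsR33 :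
    ∀ l ∈ longPathsR33, l.IsChain (R 3 3).Adj ∧ l.Nodup ∧ l.length = 7 := by
  decide

theorem exists_mem_longPathsR33 :
    ∀ s t : RectV 3 3, s ≠ t → ¬ White s.val → ¬ White t.val →
      ∃ l ∈ longPathsR33, l.head? = some s ∧ l.getLast? = some t := by
  decide

/-- In `R(3,3)`, for two distinct black vertices s and t, the longest path from
s to t has exactly 7 vertices. -/
theorem longest_path_R33_black_black (s t : RectV 3 3) (hne : s ≠ t)
    (hs : ¬ White s.val) (ht : ¬ White t.val) :
    IsGreatest {k : ℕ | ∃ p : (R 3 3).Walk s t, p.IsPath ∧ p.support.length = k} 7 := by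
  constructor
  · obtain ⟨l, hl, hls, hlt⟩ := exists_mem_longPathsR33 s t hne hs ht
    obtain ⟨hchain, hnodup, hlen⟩ := isChain_nodup_length_of_mem_longPathsR33 l hl
    obtain ⟨p, hp, rfl⟩ := SimpleGraph.exists_isPath_support_eq hls hlt hchain hnodup
    exact ⟨p, hp, hlen⟩
  · rintro k ⟨p, hp, rfl⟩
    have hbound := hp.length_support_add_one_le (P := fun v => ¬ White v.val)
      (fun _ _ h => not_congr (white_iff_not_white_of_adj h)) hs ht
    rw [card_black_R33] at hbound
    omega
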